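/- arXiv:1211.4889 — 2 statements merged into one kernel-verified Lean document; each statement's English description precedes it below -/
import Mathlib

section
/- In a jointly non-causal model, for any sequences w, x, y, z ∈ {0,1}^T with x ≡_e y, and any fixed sequence z, we have P(A = z, B = x) = P(A = z, B = y): joint partial exchangeability in the B-coordinate holds when A is held fixed. -/
open MeasureTheory

/-- `Fcnt n i j A` counts transitions from state `i` to state `j` in the
binary sequence `A` of length `n+1`. -/
def Fcnt (n : ℕ) (i j : Bool) (A : Fin (n+1) → Bool) : ℕ :=
  (Finset.univ.filter fun t : Fin n => A t.castSucc = i ∧ A t.succ = j).card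

/-- Stationary two-state Markov chain probability of a binary sequence. -/
def qseq (n : ℕ) (a0 ap am : ℝ) (A : Fin (n+1) → Bool) : ℝ :=
  (if A 0 then 1 - a0 else a0) *
    ap ^ Fcnt n false true A * am ^ Fcnt n true false A *
    (1 - ap) ^ Fcnt n false false A * (1 - am) ^ Fcnt n true true A

/-- The paper's relation `x ≡ₑ y`. -/
def TransitionEquiv (n : ℕ) (x y : Fin (n+1) → Bool) : Prop :=
  x 0 = y 0 ∧ ∀ i j : Bool, Fcnt n i j x = Fcnt n i j y

theorem qseq_eq_of_transitionEquiv {n : ℕ} {x y : Fin (n+1) → Bool}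
    (hxy : TransitionEquiv n x y) (a0 ap am : ℝ) : qseq n a0 ap am x = qseq n a0 ap am y := by
  simp only [qseq, hxy.1, hxy.2]

theorem noncausal_joint_partial_exchangeability_general
    (n : ℕ) (Θ : Type*) [MeasurableSpace Θ] (μ : Measure Θ)
    (aA0 aAp aAm aB0 aBp aBm : Θ → ℝ)
    (P : (Fin (n+1) → Bool) → (Fin (n+1) → Bool) → ℝ)
    (hP : ∀ A B, P A B =
      ∫ θ, qseq n (aA0 θ) (aAp θ) (aAm θ) A * qseq n (aB0 θ) (aBp θ) (aBm θ) B ∂μ)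
    (x y z : Fin (n+1) → Bool) (hinit : x 0 = y 0)
    (hF : ∀ i j : Bool, Fcnt n i j x = Fcnt n i j y) :
    P z x = P z y := by
  have hxy : TransitionEquiv n x y := ⟨hinit, hF⟩
  simp only [hP, qseq_eq_of_transitionEquiv hxy]

/-- In a non-causal model (a mixture over hidden attributes of products of
independent stationary Markov chains for `A` and `B`), joint partial
exchangeability holds in the `B`-coordinate with `A` held fixed: if `x ≡ₑ y`
then `P(A = z, B = x) = P(A = z, B = y)`. -/
theorem noncausal_joint_partial_exchangeability
    (n : ℕ) (Θ : Type*) [MeasurableSpace Θ] (μ : Measure Θ) [IsProbabilityMeasure μ]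
    (aA0 aAp aAm aB0 aBp aBm : Θ → ℝ)
    (hbox : ∀ᵐ θ ∂μ, aA0 θ ∈ Set.Icc (0:ℝ) 1 ∧ aAp θ ∈ Set.Icc (0:ℝ) 1 ∧
      aAm θ ∈ Set.Icc (0:ℝ) 1 ∧ aB0 θ ∈ Set.Icc (0:ℝ) 1 ∧
      aBp θ ∈ Set.Icc (0:ℝ) 1 ∧ aBm θ ∈ Set.Icc (0:ℝ) 1)
    (P : (Fin (n+1) → Bool) → (Fin (n+1) → Bool) → ℝ)
    (hP : ∀ A B, P A B =
      ∫ θ, qseq n (aA0 θ) (aAp θ) (aAm θ) A * qseq n (aB0 θ) (aBp θ) (aBm θ) B ∂μ)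
    (x y z : Fin (n+1) → Bool) (hinit : x 0 = y 0)
    (hF : ∀ i j : Bool, Fcnt n i j x = Fcnt n i j y) :
    P z x = P z y :=
  noncausal_joint_partial_exchangeability_general n Θ μ aA0 aAp aAm aB0 aBp aBm P hP x y z hinit hF
end

section
/- Let T = 4 and define the observable c⁽¹⁾(A,B) = (1{A₂=B₂≠A₃=B₃} − 1{A₂=B₃≠A₃=B₂}) · (1 − 1{A₁≠A₄}·1{B₁≠B₄}) on pairs of binary sequences of length 4. Then for every non-causal model P ∈ 𝒫₀, the expectation ⟨c⁽¹⁾(A,B)⟩_P = 0. -/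
open MeasureTheory
/-- Transition probability of a two-state stationary Markov chain: from state
`i` to state `j`, where `ap` is the `0→1` and `am` the `1→0` probability. -/
noncomputable def mstep (ap am : ℝ) (i j : Bool) : ℝ :=
  if i then (if j then 1 - am else am) else (if j then ap else 1 - ap)

/-- Probability of a length-4 binary sequence under a stationary two-state
Markov chain with `P(A₁=0) = a0`. -/
noncomputable def q4 (a0 ap am : ℝ) (A : Fin 4 → Bool) : ℝ :=
  (if A 0 then 1 - a0 else a0) *
    mstep ap am (A 0) (A 1) * mstep ap am (A 1) (A 2) * mstep ap am (A 2) (A 3)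

/-- The observable `c⁽¹⁾` of Ver Steeg–Galstyan:
`(1{A₂=B₂≠A₃=B₃} − 1{A₂=B₃≠A₃=B₂})·(1 − 1{A₁≠A₄}1{B₁≠B₄})` (1-based indices). -/
noncomputable def c1 (A B : Fin 4 → Bool) : ℝ :=
  ((if A 1 = B 1 ∧ B 1 ≠ A 2 ∧ A 2 = B 2 then (1:ℝ) else 0) -
     (if A 1 = B 2 ∧ B 2 ≠ A 2 ∧ A 2 = B 1 then (1:ℝ) else 0)) *
  (1 - (if A 0 ≠ A 3 then (1:ℝ) else 0) * (if B 0 ≠ B 3 then (1:ℝ) else 0))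

/-- Membership in `𝒫₀`, the set of non-causal models: mixtures over arbitrary
hidden attributes of products of independent stationary two-state Markov
chains for `A₁:₄` and `B₁:₄`. -/
def InP0 (P : (Fin 4 → Bool) → (Fin 4 → Bool) → ℝ) : Prop :=
  ∃ (Θ : Type) (_ : MeasurableSpace Θ) (μ : Measure Θ),
    IsProbabilityMeasure μ ∧
    ∃ a0 ap am b0 bp bm : Θ → ℝ,
      Measurable a0 ∧ Measurable ap ∧ Measurable am ∧
      Measurable b0 ∧ Measurable bp ∧ Measurable bm ∧
      (∀ᵐ θ ∂μ, a0 θ ∈ Set.Icc (0:ℝ) 1 ∧ ap θ ∈ Set.Icc (0:ℝ) 1 ∧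
        am θ ∈ Set.Icc (0:ℝ) 1 ∧ b0 θ ∈ Set.Icc (0:ℝ) 1 ∧
        bp θ ∈ Set.Icc (0:ℝ) 1 ∧ bm θ ∈ Set.Icc (0:ℝ) 1) ∧
      ∀ A B, P A B = ∫ θ, q4 (a0 θ) (ap θ) (am θ) A * q4 (b0 θ) (bp θ) (bm θ) B ∂μ

lemma sum_pi_bool4 (g : (Fin 4 → Bool) → ℝ) :
    ∑ A : Fin 4 → Bool, g A =
      ∑ a : Bool, ∑ b : Bool, ∑ c : Bool, ∑ d : Bool, g ![a, b, c, d] := by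
  have h : ∑ x : Bool × Bool × Bool × Bool, g ![x.1, x.2.1, x.2.2.1, x.2.2.2] =
      ∑ A : Fin 4 → Bool, g A :=
    Fintype.sum_bijective _ (by decide) _ _ (fun _ => rfl)
  rw [← h]
  simp only [Fintype.sum_prod_type]

lemma key_identity (a0 ap am b0 bp bm : ℝ) :
    ∑ A : Fin 4 → Bool, ∑ B : Fin 4 → Bool,
      q4 a0 ap am A * q4 b0 bp bm B * c1 A B = 0 := by
  simp only [sum_pi_bool4, q4, c1, mstep]
  simp only [Matrix.cons_val_zero, Matrix.cons_val_one, Matrix.head_cons,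
    Matrix.cons_val_two, Matrix.tail_cons, Matrix.cons_val_three, Fintype.sum_bool]
  norm_num
  ring

lemma mstep_mem {ap am : ℝ} (hp : ap ∈ Set.Icc (0:ℝ) 1) (hm : am ∈ Set.Icc (0:ℝ) 1)
    (i j : Bool) : mstep ap am i j ∈ Set.Icc (0:ℝ) 1 := by
  obtain ⟨hp0, hp1⟩ := hp; obtain ⟨hm0, hm1⟩ := hm
  cases i <;> cases j <;> simp [mstep] <;> constructor <;> linarith

lemma q4_mem {a0 ap am : ℝ} (h0 : a0 ∈ Set.Icc (0:ℝ) 1) (hp : ap ∈ Set.Icc (0:ℝ) 1)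
    (hm : am ∈ Set.Icc (0:ℝ) 1) (A : Fin 4 → Bool) :
    q4 a0 ap am A ∈ Set.Icc (0:ℝ) 1 := by
  have h1 : (if A 0 then 1 - a0 else a0) ∈ Set.Icc (0:ℝ) 1 := by
    obtain ⟨h00, h01⟩ := h0
    cases hA : A 0 <;> simp <;> constructor <;> linarith
  have h2 := mstep_mem hp hm (A 0) (A 1)
  have h3 := mstep_mem hp hm (A 1) (A 2)
  have h4 := mstep_mem hp hm (A 2) (A 3)
  unfold q4
  have p2 : (if A 0 then 1 - a0 else a0) * mstep ap am (A 0) (A 1) ∈ Set.Icc (0:ℝ) 1 :=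
    ⟨mul_nonneg h1.1 h2.1, mul_le_one₀ h1.2 h2.1 h2.2⟩
  have p3 : (if A 0 then 1 - a0 else a0) * mstep ap am (A 0) (A 1) *
      mstep ap am (A 1) (A 2) ∈ Set.Icc (0:ℝ) 1 :=
    ⟨mul_nonneg p2.1 h3.1, mul_le_one₀ p2.2 h3.1 h3.2⟩
  exact ⟨mul_nonneg p3.1 h4.1, mul_le_one₀ p3.2 h4.1 h4.2⟩

lemma c1_abs_le (A B : Fin 4 → Bool) : |c1 A B| ≤ 1 := by
  unfold c1
  split_ifs <;> simp_all <;> norm_num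

/-- For every non-causal model `P ∈ 𝒫₀`, the expectation of the observable
`c⁽¹⁾` vanishes: `⟨c⁽¹⁾(A,B)⟩_P = 0`. -/
theorem c1_expectation_zero_of_noncausal
    (P : (Fin 4 → Bool) → (Fin 4 → Bool) → ℝ) (hP : InP0 P) :
    ∑ A : Fin 4 → Bool, ∑ B : Fin 4 → Bool, P A B * c1 A B = 0 := by
  obtain ⟨Θ, mΘ, μ, hμ, a0, ap, am, b0, bp, bm, ha0, hap, ham, hb0, hbp, hbm, hbd, hPeq⟩ := hP
  have hmeas : ∀ A B : Fin 4 → Bool, Measurable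
      (fun θ => q4 (a0 θ) (ap θ) (am θ) A * q4 (b0 θ) (bp θ) (bm θ) B * c1 A B) := by
    intro A B
    apply Measurable.mul_const
    apply Measurable.mul <;> unfold q4 mstep <;> split_ifs <;> fun_prop
  have hint : ∀ A B : Fin 4 → Bool, Integrable
      (fun θ => q4 (a0 θ) (ap θ) (am θ) A * q4 (b0 θ) (bp θ) (bm θ) B * c1 A B) μ := by
    intro A B
    apply Integrable.mono' (integrable_const (1:ℝ)) (hmeas A B).aestronglyMeasurable
    filter_upwards [hbd] with θ ⟨h1, h2, h3, h4, h5, h6⟩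
    have hqa := q4_mem h1 h2 h3 A
    have hqb := q4_mem h4 h5 h6 B
    have hc := c1_abs_le A B
    rw [Real.norm_eq_abs, abs_mul, abs_mul, abs_of_nonneg hqa.1, abs_of_nonneg hqb.1]
    have hc0 : (0:ℝ) ≤ |c1 A B| := abs_nonneg _
    have p2 : q4 (a0 θ) (ap θ) (am θ) A * q4 (b0 θ) (bp θ) (bm θ) B ∈ Set.Icc (0:ℝ) 1 :=
      ⟨mul_nonneg hqa.1 hqb.1, mul_le_one₀ hqa.2 hqb.1 hqb.2⟩
    exact mul_le_one₀ p2.2 hc0 hc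
  calc ∑ A : Fin 4 → Bool, ∑ B : Fin 4 → Bool, P A B * c1 A B
      = ∑ A : Fin 4 → Bool, ∑ B : Fin 4 → Bool,
          ∫ θ, q4 (a0 θ) (ap θ) (am θ) A * q4 (b0 θ) (bp θ) (bm θ) B * c1 A B ∂μ := by
        refine Finset.sum_congr rfl fun A _ => Finset.sum_congr rfl fun B _ => ?_
        rw [hPeq, ← integral_mul_const]
    _ = ∫ θ, ∑ A : Fin 4 → Bool, ∑ B : Fin 4 → Bool,
          q4 (a0 θ) (ap θ) (am θ) A * q4 (b0 θ) (bp θ) (bm θ) B * c1 A B ∂μ := by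
        rw [integral_finset_sum _ fun A _ => integrable_finset_sum _ fun B _ => hint A B]
        exact Finset.sum_congr rfl fun A _ => (integral_finset_sum _ fun B _ => hint A B).symm
    _ = ∫ _θ, (0:ℝ) ∂μ := by
        congr 1; funext θ; exact key_identity _ _ _ _ _ _
    _ = 0 := integral_zero _ _
end
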